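/- Let I = ∃x₁∀x₂…∃x_{2p−1}∀x_{2p}. Φ be a quantified Boolean formula where Φ = ⋀_{j=1}^{m} (ℓʲ₁ ∨ ℓʲ₂ ∨ ℓʲ₃) is in 3-CNF over the variables x₁,…,x_{2p}. Let S_I be the Kripke structure with states q₁,…,q_{2p+1} and xᵢ, x̄ᵢ for 1 ≤ i ≤ 2p, transitions qᵢ → xᵢ → qᵢ₊₁ and qᵢ → x̄ᵢ → qᵢ₊₁ for each i, and a self-loop on q_{2p+1}, where each state qᵢ is labelled by the atomic proposition qᵢ and each state xᵢ (resp. x̄ᵢ) is labelled by the proposition C_j iff the literal xᵢ (resp. ¬xᵢ) occurs in the j-th clause of Φ. Then I is true if and only if q₁ ⊨_{S_I} z₁[C₁].z₂[C₂].….z_m[C_m]. EF ( q₂ ∧ AF ( q₃ ∧ EF ( … ( q_{2p} ∧ AF ( q_{2p+1} ∧ ⋀_{i=1}^{m} (zᵢ ≥ 1) ) ) … ) ) ). -/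

import Mathlib

open scoped Classical

noncomputable section

/-- A Kripke structure with states `Q` and atomic propositions `AP`. -/
structure Kripke (Q AP : Type) where
  R : Q → Q → Prop
  total : ∀ q, ∃ q', R q q'
  label : Q → AP → Prop

/-- An (infinite) run of a Kripke structure. -/
def Kripke.Run {Q AP : Type} (S : Kripke Q AP) (ρ : ℕ → Q) : Prop :=
  ∀ i, S.R (ρ i) (ρ (i + 1))

/-- The strict prefix `ρ(0) ⋯ ρ(n-1)` of a run (`n` states). -/
def runPrefix {Q : Type} (ρ : ℕ → Q) (n : ℕ) : List Q :=
  (List.range n).map ρ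

/-- Comparison operators `<, ≤, =, ≥, >`. -/
inductive Cmp where
  | lt | le | eq | ge | gt

def Cmp.eval : Cmp → ℕ → ℕ → Prop
  | .lt, a, b => a < b
  | .le, a, b => a ≤ b
  | .eq, a, b => a = b
  | .ge, a, b => a ≥ b
  | .gt, a, b => a > b

/-- CCTLv formulas over atomic propositions `AP` and variables in `ℕ`. -/
inductive VForm (AP : Type) : Type where
  | atom : AP → VForm AP
  | or : VForm AP → VForm AP → VForm AP
  | not : VForm AP → VForm AP
  | eu : VForm AP → VForm AP → VForm AP
  | au : VForm AP → VForm AP → VForm AP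
  | bind : ℕ → VForm AP → VForm AP → VForm AP
  | constr : List (ℕ × ℕ) → Cmp → ℕ → VForm AP

def lvval (l : List (ℕ × ℕ)) (v : ℕ → ℕ) : ℕ :=
  (l.map (fun t => t.1 * v t.2)).sum

mutual
/-- Satisfaction `(q,v,ε) ⊨ φ` of a CCTLv formula (see stmt 13 for the
role of the variable bound `k`). -/
def vsat {Q AP : Type} (S : Kripke Q AP) :
    ℕ → VForm AP → Q → (ℕ → ℕ) → (ℕ → Option (VForm AP)) → Prop
  | _, .atom p, q, _, _ => S.label q p
  | k, .or φ ψ, q, v, ε => vsat S k φ q v ε ∨ vsat S k ψ q v ε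
  | k, .not φ, q, v, ε => ¬ vsat S k φ q v ε
  | _, .constr l c n, _, v, _ => c.eval (lvval l v) n
  | k, .bind z ψ φ, q, v, ε =>
      vsat S k φ q (Function.update v z 0) (Function.update ε z (some ψ))
  | k, .eu φ ψ, q, v, ε => ∃ ρ, S.Run ρ ∧ ρ 0 = q ∧
      ∃ i, vsat S k ψ (ρ i) (updAlong S k v ε (runPrefix ρ i)) ε ∧
        ∀ j < i, vsat S k φ (ρ j) (updAlong S k v ε (runPrefix ρ j)) ε
  | k, .au φ ψ, q, v, ε => ∀ ρ, S.Run ρ → ρ 0 = q →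
      ∃ i, vsat S k ψ (ρ i) (updAlong S k v ε (runPrefix ρ i)) ε ∧
        ∀ j < i, vsat S k φ (ρ j) (updAlong S k v ε (runPrefix ρ j)) ε
termination_by k φ _ _ _ => (k, sizeOf φ, 0)

def updAlong {Q AP : Type} (S : Kripke Q AP) :
    ℕ → (ℕ → ℕ) → (ℕ → Option (VForm AP)) → List Q → (ℕ → ℕ)
  | _, v, _, [] => v
  | k, v, ε, r :: t => updAlong S k (updOne S k v ε r) ε t
termination_by k _ _ σ => (k, 0, sizeOf σ)

def updOne {Q AP : Type} (S : Kripke Q AP) (k : ℕ) (v : ℕ → ℕ)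
    (ε : ℕ → Option (VForm AP)) (r : Q) : ℕ → ℕ :=
  fun z => if h : z < k ∧ (ε z).isSome then
      (if vsat S z ((ε z).get h.2) r v ε then v z + 1 else v z)
    else v z
termination_by (k, 0, 0)
end

/-! ### The QBF instance and the Kripke structure `S_I`.

An instance is given by `p` (variables `x₁,…,x_{2p}`, with `∃` on odd and
`∀` on even indices) and a 3-CNF matrix of `m` clauses: `cl j t` is the
`t`-th literal of the `j`-th clause (`1 ≤ j ≤ m`), given as a pair
(variable index, polarity). -/

/-- Truth of the matrix under an assignment. -/
def PhiTrue (m : ℕ) (cl : ℕ → Fin 3 → ℕ × Bool) (v : ℕ → Bool) : Prop :=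
  ∀ j, 1 ≤ j → j ≤ m → ∃ t : Fin 3, v (cl j t).1 = (cl j t).2

/-- Alternating quantification over `x₁, …, x_{2p}`: `r` quantifiers
remain, the next variable to quantify is `2p − r + 1`. -/
def QBFAux (p m : ℕ) (cl : ℕ → Fin 3 → ℕ × Bool) : ℕ → (ℕ → Bool) → Prop
  | 0, v => PhiTrue m cl v
  | r + 1, v =>
      if (2 * p - r) % 2 = 1 then
        ∃ b, QBFAux p m cl r (Function.update v (2 * p - r) b)
      else
        ∀ b, QBFAux p m cl r (Function.update v (2 * p - r) b)

/-- The QBF instance `I = ∃x₁∀x₂…∃x_{2p−1}∀x_{2p}.Φ` is true. -/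
def QBFTrue (p m : ℕ) (cl : ℕ → Fin 3 → ℕ × Bool) : Prop :=
  QBFAux p m cl (2 * p) (fun _ => false)

/-- States of `S_I`: `Sum.inl i` is `qᵢ`, `Sum.inr (i, true)` is `xᵢ` and
`Sum.inr (i, false)` is `x̄ᵢ` (only indices `1 ≤ i` matter; the remaining
states are unreachable from `q₁`). -/
abbrev QState := ℕ ⊕ (ℕ × Bool)

/-- Atomic propositions: `Sum.inl i` is the proposition `qᵢ` and
`Sum.inr j` is the clause proposition `C_j`. -/
abbrev QProp := ℕ ⊕ ℕ

/-- The Kripke structure `S_I` associated with the QBF instance: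
`qᵢ → xᵢ → qᵢ₊₁`, `qᵢ → x̄ᵢ → qᵢ₊₁` for `1 ≤ i ≤ 2p`, and a self-loop on
`q_{2p+1}`; `xᵢ`/`x̄ᵢ` is labelled `C_j` iff the corresponding literal
occurs in clause `j`. -/
def SI (p : ℕ) (cl : ℕ → Fin 3 → ℕ × Bool) : Kripke QState QProp where
  R a b :=
    match a, b with
    | Sum.inl i, Sum.inr (i', _) => i' = i ∧ 1 ≤ i ∧ i ≤ 2 * p
    | Sum.inr (i, _), Sum.inl i' => i' = i + 1
    | Sum.inl i, Sum.inl i' => i' = i ∧ (i = 0 ∨ 2 * p + 1 ≤ i)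
    | _, _ => False
  total := by
    rintro (i | ⟨i, b⟩)
    · by_cases h : 1 ≤ i ∧ i ≤ 2 * p
      · exact ⟨Sum.inr (i, true), rfl, h.1, h.2⟩
      · exact ⟨Sum.inl i, rfl, by omega⟩
    · exact ⟨Sum.inl (i + 1), rfl⟩
  label a P :=
    match a, P with
    | Sum.inl i, Sum.inl j => j = i
    | Sum.inr (i, b), Sum.inr j => ∃ t : Fin 3, cl j t = (i, b)
    | _, _ => False

/-- Derived connectives. -/
def vand {AP : Type} (a b : VForm AP) : VForm AP := .not (.or (.not a) (.not b))

def vtop : VForm QProp := .or (.atom (Sum.inl 0)) (.not (.atom (Sum.inl 0)))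

def EF (φ : VForm QProp) : VForm QProp := .eu vtop φ

def AF (φ : VForm QProp) : VForm QProp := .au vtop φ

/-- The conjunction `⋀_{i=1}^{m} (zᵢ ≥ 1)`. -/
def core : ℕ → VForm QProp
  | 0 => vtop
  | 1 => .constr [(1, 1)] .ge 1
  | j + 2 => vand (.constr [(1, j + 2)] .ge 1) (core (j + 1))

/-- The nested modalities
`EF (q₂ ∧ AF (q₃ ∧ EF (… (q_{2p} ∧ AF (q_{2p+1} ∧ ⋀ᵢ zᵢ ≥ 1)) …)))`:
`build p m r` has `r` remaining modalities, the next one targeting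
`q_{2p+2−r}` (`EF` for even indices, `AF` for odd ones). -/
def build (p m : ℕ) : ℕ → VForm QProp
  | 0 => core m
  | r + 1 =>
      if (2 * p + 2 - (r + 1)) % 2 = 0 then
        EF (vand (.atom (Sum.inl (2 * p + 2 - (r + 1)))) (build p m r))
      else
        AF (vand (.atom (Sum.inl (2 * p + 2 - (r + 1)))) (build p m r))

/-- The prefix of bindings `z₁[C₁].z₂[C₂].….z_m[C_m]`. -/
def bindAll : ℕ → VForm QProp → VForm QProp
  | 0, φ => φ
  | j + 1, φ => bindAll j (.bind (j + 1) (.atom (Sum.inr (j + 1))) φ)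

/-- The CCTLv formula `z₁[C₁]…z_m[C_m]. EF (q₂ ∧ AF (q₃ ∧ … ))`. -/
def PsiI (p m : ℕ) : VForm QProp := bindAll m (build p m (2 * p))

/-! ### Auxiliary development for the proof -/

section Aux

variable {Q AP : Type}

-- Unfolding lemmas for `vsat`.
lemma vsat_atom (S : Kripke Q AP) (k : ℕ) (P : AP) (q v ε) :
    vsat S k (.atom P) q v ε ↔ S.label q P := by rw [vsat]

lemma vsat_or (S : Kripke Q AP) (k : ℕ) (a b : VForm AP) (q v ε) :
    vsat S k (.or a b) q v ε ↔ vsat S k a q v ε ∨ vsat S k b q v ε := by rw [vsat]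

lemma vsat_not (S : Kripke Q AP) (k : ℕ) (a : VForm AP) (q v ε) :
    vsat S k (.not a) q v ε ↔ ¬ vsat S k a q v ε := by rw [vsat]

lemma vsat_constr (S : Kripke Q AP) (k : ℕ) (l c n) (q : Q) (v) (ε) :
    vsat S k (.constr l c n) q v ε ↔ c.eval (lvval l v) n := by rw [vsat]

lemma vsat_bind (S : Kripke Q AP) (k : ℕ) (z ψ φ) (q : Q) (v ε) :
    vsat S k (.bind z ψ φ) q v ε ↔
      vsat S k φ q (Function.update v z 0) (Function.update ε z (some ψ)) := by rw [vsat]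

lemma vsat_eu (S : Kripke Q AP) (k : ℕ) (a b : VForm AP) (q v ε) :
    vsat S k (.eu a b) q v ε ↔ ∃ ρ, S.Run ρ ∧ ρ 0 = q ∧
      ∃ i, vsat S k b (ρ i) (updAlong S k v ε (runPrefix ρ i)) ε ∧
        ∀ j < i, vsat S k a (ρ j) (updAlong S k v ε (runPrefix ρ j)) ε := by rw [vsat]

lemma vsat_au (S : Kripke Q AP) (k : ℕ) (a b : VForm AP) (q v ε) :
    vsat S k (.au a b) q v ε ↔ ∀ ρ, S.Run ρ → ρ 0 = q →
      ∃ i, vsat S k b (ρ i) (updAlong S k v ε (runPrefix ρ i)) ε ∧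
        ∀ j < i, vsat S k a (ρ j) (updAlong S k v ε (runPrefix ρ j)) ε := by rw [vsat]

lemma vsat_vand (S : Kripke Q AP) (k : ℕ) (a b : VForm AP) (q v ε) :
    vsat S k (vand a b) q v ε ↔ vsat S k a q v ε ∧ vsat S k b q v ε := by
  rw [vand, vsat_not, vsat_or, vsat_not, vsat_not]; tauto

lemma vsat_vtop {Q' : Type} (S : Kripke Q' QProp) (k : ℕ) (q v ε) :
    vsat S k vtop q v ε := by
  rw [vtop, vsat_or, vsat_not]; exact em _

lemma updAlong_nil (S : Kripke Q AP) (k v ε) :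
    updAlong S k v ε [] = v := by rw [updAlong]

lemma updAlong_cons (S : Kripke Q AP) (k v ε) (r : Q) (t : List Q) :
    updAlong S k v ε (r :: t) = updAlong S k (updOne S k v ε r) ε t := by rw [updAlong]

lemma updAlong_append (S : Kripke Q AP) (k ε) (l₁ l₂ : List Q) : ∀ v,
    updAlong S k v ε (l₁ ++ l₂) = updAlong S k (updAlong S k v ε l₁) ε l₂ := by
  induction l₁ with
  | nil => intro v; rw [List.nil_append, updAlong_nil]
  | cons r t ih => intro v; rw [List.cons_append, updAlong_cons, updAlong_cons, ih]

lemma runPrefix_succ {Q : Type} (ρ : ℕ → Q) (n : ℕ) :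
    runPrefix ρ (n + 1) = runPrefix ρ n ++ [ρ n] := by
  simp [runPrefix, List.range_succ]

lemma runPrefix_two {Q : Type} (ρ : ℕ → Q) :
    runPrefix ρ 2 = [ρ 0, ρ 1] := by
  simp [runPrefix, List.range_succ]

end Aux

section SIfacts

variable {p m : ℕ} {cl : ℕ → Fin 3 → ℕ × Bool}

lemma R_inl_inl {i i' : ℕ} :
    (SI p cl).R (.inl i) (.inl i') ↔ i' = i ∧ (i = 0 ∨ 2 * p + 1 ≤ i) := Iff.rfl

lemma R_inl_inr {i i' : ℕ} {b : Bool} :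
    (SI p cl).R (.inl i) (.inr (i', b)) ↔ i' = i ∧ 1 ≤ i ∧ i ≤ 2 * p := Iff.rfl

lemma R_inr_inl {i i' : ℕ} {b : Bool} :
    (SI p cl).R (.inr (i, b)) (.inl i') ↔ i' = i + 1 := Iff.rfl

lemma R_inr_inr {i i' : ℕ} {b b' : Bool} :
    ¬ (SI p cl).R (.inr (i, b)) (.inr (i', b')) := fun h => h

lemma label_inl_inl {i j : ℕ} :
    (SI p cl).label (.inl i) (.inl j) ↔ j = i := Iff.rfl

lemma label_inl_inr {i z : ℕ} :
    ¬ (SI p cl).label (.inl i) (.inr z) := fun h => h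

lemma label_inr_inl {i j : ℕ} {b : Bool} :
    ¬ (SI p cl).label (.inr (i, b)) (.inl j) := fun h => h

lemma label_inr_inr {i z : ℕ} {b : Bool} :
    (SI p cl).label (.inr (i, b)) (.inr z) ↔ ∃ t : Fin 3, cl z t = (i, b) := Iff.rfl

/-- The environment binding `z ∈ [1,m]` to the guard `C_z`. -/
def eps0 (m : ℕ) : ℕ → Option (VForm QProp) :=
  fun z => if 1 ≤ z ∧ z ≤ m then some (.atom (Sum.inr z)) else none

/-- Counter update when passing the literal state `(i, β)`. -/
def stepv (m : ℕ) (cl : ℕ → Fin 3 → ℕ × Bool) (v : ℕ → ℕ) (i : ℕ) (β : Bool) : ℕ → ℕ :=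
  fun z => if 1 ≤ z ∧ z ≤ m ∧ (∃ t : Fin 3, cl z t = (i, β)) then v z + 1 else v z

lemma updOne_inl (v : ℕ → ℕ) (i : ℕ) :
    updOne (SI p cl) (m + 1) v (eps0 m) (Sum.inl i) = v := by
  funext z
  rw [updOne]
  split
  · rename_i h
    have hz : 1 ≤ z ∧ z ≤ m := by
      by_contra hc
      have : eps0 m z = none := if_neg hc
      rw [this] at h; simp at h
    have he : eps0 m z = some (.atom (Sum.inr z)) := if_pos hz
    have hg : (eps0 m z).get h.2 = .atom (Sum.inr z) := by
      simp only [he, Option.get_some]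
    rw [if_neg]
    rw [hg, vsat_atom]
    exact label_inl_inr
  · rfl

lemma updOne_inr (v : ℕ → ℕ) (i : ℕ) (β : Bool) :
    updOne (SI p cl) (m + 1) v (eps0 m) (Sum.inr (i, β)) = stepv m cl v i β := by
  funext z
  rw [updOne, stepv]
  by_cases hz : 1 ≤ z ∧ z ≤ m
  · have he : eps0 m z = some (.atom (Sum.inr z)) := if_pos hz
    have hs : (eps0 m z).isSome := by rw [he]; rfl
    rw [dif_pos ⟨by omega, hs⟩]
    have hg : (eps0 m z).get hs = .atom (Sum.inr z) := by
      simp only [he, Option.get_some]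
    rw [hg, vsat_atom]
    by_cases hx : ∃ t : Fin 3, cl z t = (i, β)
    · rw [if_pos (label_inr_inr.mpr hx), if_pos ⟨hz.1, hz.2, hx⟩]
    · rw [if_neg (fun h => hx (label_inr_inr.mp h)), if_neg (by tauto)]
  · have he : eps0 m z = none := if_neg hz
    rw [dif_neg (fun h => by rw [he] at h; simp at h),
      if_neg (by tauto)]
end SIfacts
section Runs

variable {p m : ℕ} {cl : ℕ → Fin 3 → ℕ × Bool}

/-- Level of a state, strictly increasing along transitions (except loops). -/
def qidx : QState → ℕ
  | Sum.inl i => 2 * i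
  | Sum.inr (i, _) => 2 * i + 1

lemma R_qidx {a b : QState} (h : (SI p cl).R a b) (ha : a ≠ Sum.inl 0) :
    qidx a < qidx b ∨ (b = a ∧ ∃ i, a = Sum.inl i ∧ 2 * p + 1 ≤ i) := by
  match a, b with
  | Sum.inl i, Sum.inr (i', b) =>
    obtain ⟨h1, h2, h3⟩ := R_inl_inr.mp h
    left; subst h1; simp [qidx]
  | Sum.inr (i, b), Sum.inl i' =>
    have h1 := R_inr_inl.mp h
    left; subst h1; simp [qidx]; omega
  | Sum.inl i, Sum.inl i' =>
    obtain ⟨h1, h2⟩ := R_inl_inl.mp h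
    subst h1
    rcases h2 with h2 | h2
    · exact absurd (by rw [h2]) ha
    · exact Or.inr ⟨rfl, _, rfl, h2⟩
  | Sum.inr (i, b), Sum.inr (i', b') => exact absurd h R_inr_inr

lemma qidx_pos {a : QState} (ha : a ≠ Sum.inl 0) : 1 ≤ qidx a := by
  match a with
  | Sum.inl i =>
    have : i ≠ 0 := fun h => ha (by rw [h])
    simp [qidx]; omega
  | Sum.inr (i, b) => simp [qidx]

lemma qidx_mono {ρ : ℕ → QState} (hρ : (SI p cl).Run ρ) (h0 : ρ 0 ≠ Sum.inl 0) :
    ∀ k, qidx (ρ 0) ≤ qidx (ρ k) := by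
  intro k
  induction k with
  | zero => exact le_refl _
  | succ k ih =>
    have hk : ρ k ≠ Sum.inl 0 := by
      intro h
      have h1 := qidx_pos h0
      rw [h] at ih
      have h2 : qidx (Sum.inl 0 : QState) = 0 := rfl
      omega
    rcases R_qidx (hρ k) hk with h | ⟨h, _⟩
    · omega
    · rw [h]; exact ih

/-- A run never revisits `q_c` for `1 ≤ c ≤ 2p`. -/
lemma no_revisit {ρ : ℕ → QState} (hρ : (SI p cl).Run ρ) {c : ℕ}
    (h0 : ρ 0 = Sum.inl c) (hc1 : 1 ≤ c) (hc2 : c ≤ 2 * p) :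
    ∀ k, 1 ≤ k → ρ k ≠ Sum.inl c := by
  intro k hk h
  have hne : ρ 0 ≠ Sum.inl 0 := by rw [h0]; intro hh; cases hh; omega
  have hstep : qidx (ρ 0) < qidx (ρ 1) := by
    rcases R_qidx (hρ 0) hne with hlt | ⟨_, i, hi, hge⟩
    · exact hlt
    · rw [h0] at hi; cases hi; omega
  have hσ : (SI p cl).Run (fun k => ρ (k + 1)) := fun j => hρ (j + 1)
  have hne1 : ρ 1 ≠ Sum.inl 0 := by
    intro hh; rw [hh] at hstep; rw [h0] at hstep; simp [qidx] at hstep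
  have hmono := qidx_mono hσ (by simpa using hne1) (k - 1)
  have hk1 : k - 1 + 1 = k := by omega
  rw [hk1] at hmono
  rw [h0] at hstep
  rw [h] at hmono
  simp [qidx] at hstep hmono
  omega

/-- After reaching `q_c` with `c ≥ 2p+1`, a run stays there forever. -/
lemma loop_forever {ρ : ℕ → QState} (hρ : (SI p cl).Run ρ) {c : ℕ}
    (h0 : ρ 0 = Sum.inl c) (hc : 2 * p + 1 ≤ c) :
    ∀ k, ρ k = Sum.inl c := by
  intro k
  induction k with
  | zero => exact h0
  | succ k ih =>
    have h := hρ k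
    rw [ih] at h
    match hn : ρ (k + 1) with
    | Sum.inl i' => rw [hn] at h; rw [(R_inl_inl.mp h).1]
    | Sum.inr (i', b) =>
      rw [hn] at h
      obtain ⟨_, _, h3⟩ := R_inl_inr.mp h
      omega

/-- Shape of the first two steps of a run from `q_n`, `1 ≤ n ≤ 2p`. -/
lemma run_shape {ρ : ℕ → QState} (hρ : (SI p cl).Run ρ) {n : ℕ}
    (h0 : ρ 0 = Sum.inl n) (hn1 : 1 ≤ n) (hn2 : n ≤ 2 * p) :
    ∃ β, ρ 1 = Sum.inr (n, β) ∧ ρ 2 = Sum.inl (n + 1) := by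
  have h := hρ 0
  rw [h0] at h
  rcases h1 : ρ 1 with i' | ⟨i', β⟩
  · rw [h1] at h
    obtain ⟨_, hc⟩ := R_inl_inl.mp h
    omega
  · rw [h1] at h
    obtain ⟨hi, _, _⟩ := R_inl_inr.mp h
    subst hi
    have h' := hρ 1
    rw [h1] at h'
    rcases h2 : ρ 2 with j | ⟨j, b'⟩
    · rw [h2] at h'
      exact ⟨β, rfl, by rw [R_inr_inl.mp h']⟩
    · rw [h2] at h'
      exact absurd h' R_inr_inr

lemma upd_prefix_two {ρ : ℕ → QState} {n : ℕ} {β : Bool}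
    (h0 : ρ 0 = Sum.inl n) (h1 : ρ 1 = Sum.inr (n, β)) (v : ℕ → ℕ) :
    updAlong (SI p cl) (m + 1) v (eps0 m) (runPrefix ρ 2) = stepv m cl v n β := by
  rw [runPrefix_two, h0, h1, updAlong_cons, updAlong_cons, updAlong_nil,
    updOne_inl, updOne_inr]

/-- Key lemma: any visit to `q_{n+1}` along a run from `q_n` carries the
counter valuation `stepv v n β`. -/
lemma upd_prefix_visit {ρ : ℕ → QState} (hρ : (SI p cl).Run ρ) {n : ℕ}
    (h0 : ρ 0 = Sum.inl n) (hn1 : 1 ≤ n) (hn2 : n ≤ 2 * p) {β : Bool}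
    (h1 : ρ 1 = Sum.inr (n, β)) {i : ℕ} (hi : ρ i = Sum.inl (n + 1)) (v : ℕ → ℕ) :
    updAlong (SI p cl) (m + 1) v (eps0 m) (runPrefix ρ i) = stepv m cl v n β := by
  have h2 : ρ 2 = Sum.inl (n + 1) := by
    obtain ⟨β', hb1, hb2⟩ := run_shape hρ h0 hn1 hn2
    exact hb2
  have hige : 2 ≤ i := by
    match i, hi with
    | 0, hi => rw [h0] at hi; have := Sum.inl.inj hi; omega
    | 1, hi => rw [h1] at hi; cases hi
    | (k+2), hi => omega
  by_cases hcase : n + 1 ≤ 2 * p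
  · -- then i = 2 is forced
    have hσ : (SI p cl).Run (fun k => ρ (k + 2)) := fun j => hρ (j + 2)
    have : i = 2 := by
      by_contra hne
      have h3 : 1 ≤ i - 2 := by omega
      have := no_revisit hσ (by simpa using h2) (by omega) hcase (i - 2) h3
      have hieq : i - 2 + 2 = i := by omega
      rw [hieq] at this
      exact this hi
    rw [this]; exact upd_prefix_two h0 h1 v
  · -- n = 2p : everything from position 2 on is q_{2p+1}
    have hn : n = 2 * p := by omega
    have hσ : (SI p cl).Run (fun k => ρ (k + 2)) := fun j => hρ (j + 2)
    have hloop := loop_forever hσ (by simpa using h2) (by omega)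
    have haux : ∀ k, updAlong (SI p cl) (m + 1) v (eps0 m) (runPrefix ρ (2 + k))
        = stepv m cl v n β := by
      intro k
      induction k with
      | zero => exact upd_prefix_two h0 h1 v
      | succ k ih =>
        have : 2 + (k + 1) = (2 + k) + 1 := by omega
        rw [this, runPrefix_succ, updAlong_append, ih]
        have hk : ρ (2 + k) = Sum.inl (n + 1) := by
          have := hloop k
          rw [show k + 2 = 2 + k by omega] at this
          rw [this, hn]
        rw [hk, updAlong_cons, updAlong_nil, updOne_inl]
    have : i = 2 + (i - 2) := by omega
    rw [this]; exact haux (i - 2)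

end Runs
section Steps

variable {p m : ℕ} {cl : ℕ → Fin 3 → ℕ × Bool}

/-- Successor function for the canonical run. -/
def nxt (p : ℕ) : QState → QState
  | Sum.inl i => if 1 ≤ i ∧ i ≤ 2 * p then Sum.inr (i, true) else Sum.inl i
  | Sum.inr (i, _) => Sum.inl (i + 1)

lemma R_nxt (s : QState) : (SI p cl).R s (nxt p s) := by
  match s with
  | Sum.inl i =>
    rw [nxt]
    split
    · rename_i h; exact R_inl_inr.mpr ⟨rfl, h⟩
    · rename_i h; exact R_inl_inl.mpr ⟨rfl, by omega⟩
  | Sum.inr (i, b) => exact R_inr_inl.mpr rfl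

/-- Canonical run from `q_n` choosing literal `β` first, then always `true`. -/
def crun (p n : ℕ) (β : Bool) : ℕ → QState
  | 0 => Sum.inl n
  | 1 => Sum.inr (n, β)
  | (k + 2) => (nxt p)^[k] (Sum.inl (n + 1))

lemma crun_run {n : ℕ} (hn1 : 1 ≤ n) (hn2 : n ≤ 2 * p) (β : Bool) :
    (SI p cl).Run (crun p n β) := by
  intro k
  match k with
  | 0 => exact R_inl_inr.mpr ⟨rfl, hn1, hn2⟩
  | 1 =>
    show (SI p cl).R (Sum.inr (n, β)) ((nxt p)^[0] (Sum.inl (n + 1)))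
    exact R_inr_inl.mpr rfl
  | (k + 2) =>
    show (SI p cl).R ((nxt p)^[k] (Sum.inl (n + 1))) ((nxt p)^[k+1] (Sum.inl (n + 1)))
    rw [Function.iterate_succ_apply']
    exact R_nxt _

lemma crun_two (n : ℕ) (β : Bool) : crun p n β 2 = Sum.inl (n + 1) := rfl

/-- Step lemma for `EF (q_{n+1} ∧ φ)`. -/
lemma step_EF {n : ℕ} (hn1 : 1 ≤ n) (hn2 : n ≤ 2 * p) (φ : VForm QProp) (v : ℕ → ℕ) :
    vsat (SI p cl) (m + 1) (EF (vand (.atom (Sum.inl (n + 1))) φ)) (Sum.inl n) v (eps0 m) ↔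
      ∃ β, vsat (SI p cl) (m + 1) φ (Sum.inl (n + 1)) (stepv m cl v n β) (eps0 m) := by
  rw [EF, vsat_eu]
  constructor
  · rintro ⟨ρ, hρ, h0, i, hsat, -⟩
    rw [vsat_vand, vsat_atom] at hsat
    obtain ⟨hatom, hφ⟩ := hsat
    have hqi : ρ i = Sum.inl (n + 1) := by
      rcases hq : ρ i with c | ⟨c, b⟩
      · rw [hq] at hatom; rw [label_inl_inl.mp hatom]
      · rw [hq] at hatom; exact absurd hatom label_inr_inl
    obtain ⟨β, h1, h2⟩ := run_shape hρ h0 hn1 hn2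
    refine ⟨β, ?_⟩
    rw [hqi] at hφ
    rwa [upd_prefix_visit hρ h0 hn1 hn2 h1 hqi v] at hφ
  · rintro ⟨β, hφ⟩
    refine ⟨crun p n β, crun_run hn1 hn2 β, rfl, 2, ?_, fun j _ => vsat_vtop _ _ _ _ _⟩
    rw [vsat_vand, vsat_atom, crun_two]
    refine ⟨label_inl_inl.mpr rfl, ?_⟩
    rwa [upd_prefix_two (ρ := crun p n β) rfl rfl v]

/-- Step lemma for `AF (q_{n+1} ∧ φ)`. -/
lemma step_AF {n : ℕ} (hn1 : 1 ≤ n) (hn2 : n ≤ 2 * p) (φ : VForm QProp) (v : ℕ → ℕ) :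
    vsat (SI p cl) (m + 1) (AF (vand (.atom (Sum.inl (n + 1))) φ)) (Sum.inl n) v (eps0 m) ↔
      ∀ β, vsat (SI p cl) (m + 1) φ (Sum.inl (n + 1)) (stepv m cl v n β) (eps0 m) := by
  rw [AF, vsat_au]
  constructor
  · intro h β
    obtain ⟨i, hsat, -⟩ := h (crun p n β) (crun_run hn1 hn2 β) rfl
    rw [vsat_vand, vsat_atom] at hsat
    obtain ⟨hatom, hφ⟩ := hsat
    have hqi : crun p n β i = Sum.inl (n + 1) := by
      rcases hq : crun p n β i with c | ⟨c, b⟩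
      · rw [hq] at hatom; rw [label_inl_inl.mp hatom]
      · rw [hq] at hatom; exact absurd hatom label_inr_inl
    rw [hqi] at hφ
    rwa [upd_prefix_visit (crun_run hn1 hn2 β) rfl hn1 hn2 rfl hqi v] at hφ
  · intro h ρ hρ h0
    obtain ⟨β, h1, h2⟩ := run_shape hρ h0 hn1 hn2
    refine ⟨2, ?_, fun j _ => vsat_vtop _ _ _ _ _⟩
    rw [vsat_vand, vsat_atom, h2]
    exact ⟨label_inl_inl.mpr rfl, by rw [upd_prefix_two h0 h1 v]; exact h β⟩

end Steps
section Main

variable {p m : ℕ} {cl : ℕ → Fin 3 → ℕ × Bool}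

lemma vsat_core (k : ℕ) (M : ℕ) (q : QState) (v : ℕ → ℕ) (ε) :
    vsat (SI p cl) k (core M) q v ε ↔ ∀ j, 1 ≤ j → j ≤ M → 1 ≤ v j := by
  induction M with
  | zero =>
    rw [core]
    exact iff_of_true (vsat_vtop _ _ _ _ _) (fun j h1 h2 => by omega)
  | succ M ih =>
    rcases M with _ | M'
    · rw [core, vsat_constr]
      have hl : lvval [(1, 1)] v = v 1 := by simp [lvval]
      rw [hl]
      constructor
      · intro h j h1 h2
        have : j = 1 := by omega
        rw [this]; exact h
      · intro h; exact h 1 le_rfl le_rfl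
    · rw [core, vsat_vand, vsat_constr, ih]
      have hl : lvval [(1, M' + 2)] v = v (M' + 2) := by simp [lvval]
      rw [hl]
      constructor
      · rintro ⟨h1, h2⟩ j hj1 hj2
        rcases Nat.lt_or_ge j (M' + 2) with h | h
        · exact h2 j hj1 (by omega)
        · have : j = M' + 2 := by omega
          rw [this]; exact h1
      · intro h
        exact ⟨h _ (by omega) (by omega), fun j h1 h2 => h j h1 (by omega)⟩

lemma vsat_bindAll (k : ℕ) (q : QState) :
    ∀ (J : ℕ) (φ : VForm QProp) (v : ℕ → ℕ) (ε : ℕ → Option (VForm QProp)),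
    vsat (SI p cl) k (bindAll J φ) q v ε ↔
      vsat (SI p cl) k φ q (fun z => if 1 ≤ z ∧ z ≤ J then 0 else v z)
        (fun z => if 1 ≤ z ∧ z ≤ J then some (.atom (Sum.inr z)) else ε z) := by
  intro J
  induction J with
  | zero =>
    intro φ v ε
    rw [bindAll]
    have h1 : (fun z => if 1 ≤ z ∧ z ≤ 0 then 0 else v z) = v := by
      funext z; rw [if_neg (by omega)]
    have h2 : (fun z => if 1 ≤ z ∧ z ≤ 0 then some (VForm.atom (Sum.inr z : QProp)) else ε z) = ε := by
      funext z; rw [if_neg (by omega)]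
    rw [h1, h2]
  | succ J ih =>
    intro φ v ε
    rw [bindAll, ih, vsat_bind]
    have h1 : Function.update (fun z => if 1 ≤ z ∧ z ≤ J then 0 else v z) (J + 1) 0
        = fun z => if 1 ≤ z ∧ z ≤ J + 1 then 0 else v z := by
      funext z
      rcases eq_or_ne z (J + 1) with h | h
      · rw [h, Function.update_self, if_pos (by omega)]
      · rw [Function.update_of_ne h]
        by_cases hz : 1 ≤ z ∧ z ≤ J
        · rw [if_pos hz, if_pos (by omega)]
        · rw [if_neg hz, if_neg (by omega)]
    have h2 : Function.update
          (fun z => if 1 ≤ z ∧ z ≤ J then some (VForm.atom (Sum.inr z : QProp)) else ε z)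
          (J + 1) (some (.atom (Sum.inr (J + 1))))
        = fun z => if 1 ≤ z ∧ z ≤ J + 1 then some (.atom (Sum.inr z)) else ε z := by
      funext z
      rcases eq_or_ne z (J + 1) with h | h
      · rw [h, Function.update_self, if_pos (by omega)]
      · rw [Function.update_of_ne h]
        by_cases hz : 1 ≤ z ∧ z ≤ J
        · rw [if_pos hz, if_pos (by omega)]
        · rw [if_neg hz, if_neg (by omega)]
    rw [h1, h2]

/-- The main induction: correspondence between the QBF game and the formula. -/
lemma main_ind
    (hcl : ∀ j, 1 ≤ j → j ≤ m → ∀ t : Fin 3,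
      1 ≤ (cl j t).1 ∧ (cl j t).1 ≤ 2 * p) :
    ∀ r, r ≤ 2 * p → ∀ (b : ℕ → Bool) (v : ℕ → ℕ),
    (∀ j, 1 ≤ j → j ≤ m →
      (1 ≤ v j ↔ ∃ i, 1 ≤ i ∧ i ≤ 2 * p - r ∧ ∃ t : Fin 3, cl j t = (i, b i))) →
    (QBFAux p m cl r b ↔
      vsat (SI p cl) (m + 1) (build p m r) (Sum.inl (2 * p + 1 - r)) v (eps0 m)) := by
  intro r
  induction r with
  | zero =>
    intro _ b v hv
    rw [QBFAux, build, vsat_core]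
    constructor
    · intro h j hj1 hj2
      obtain ⟨t, ht⟩ := h j hj1 hj2
      refine (hv j hj1 hj2).mpr ⟨(cl j t).1, (hcl j hj1 hj2 t).1, ?_, t, ?_⟩
      · simpa using (hcl j hj1 hj2 t).2
      · rw [ht]
    · intro h j hj1 hj2
      obtain ⟨i, hi1, hi2, t, ht⟩ := (hv j hj1 hj2).mp (h j hj1 hj2)
      exact ⟨t, by rw [ht]⟩
  | succ r ih =>
    intro hr b v hv
    have hrr : r ≤ 2 * p := by omega
    have hn1 : 1 ≤ 2 * p - r := by omega
    have hn2 : 2 * p - r ≤ 2 * p := by omega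
    have hstate : 2 * p + 1 - (r + 1) = 2 * p - r := by omega
    have hatomidx : 2 * p + 2 - (r + 1) = (2 * p - r) + 1 := by omega
    have hstate' : 2 * p + 1 - r = (2 * p - r) + 1 := by omega
    have hinv : ∀ (β : Bool), ∀ j, 1 ≤ j → j ≤ m →
        (1 ≤ stepv m cl v (2 * p - r) β j ↔
          ∃ i, 1 ≤ i ∧ i ≤ 2 * p - r ∧
            ∃ t : Fin 3, cl j t = (i, Function.update b (2 * p - r) β i)) := by
      intro β j hj1 hj2
      rw [stepv]
      by_cases hx : ∃ t : Fin 3, cl j t = (2 * p - r, β)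
      · rw [if_pos ⟨hj1, hj2, hx⟩]
        constructor
        · intro _
          obtain ⟨t, ht⟩ := hx
          exact ⟨2 * p - r, hn1, le_refl _, t, by rw [ht, Function.update_self]⟩
        · intro _; omega
      · rw [if_neg (by tauto)]
        rw [hv j hj1 hj2]
        constructor
        · rintro ⟨i, hi1, hi2, t, ht⟩
          have hne : i ≠ 2 * p - r := by omega
          exact ⟨i, hi1, by omega, t, by rw [ht, Function.update_of_ne hne]⟩
        · rintro ⟨i, hi1, hi2, t, ht⟩
          rcases eq_or_ne i (2 * p - r) with he | hne
          · exfalso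
            rw [he, Function.update_self] at ht
            exact hx ⟨t, ht⟩
          · rw [Function.update_of_ne hne] at ht
            exact ⟨i, hi1, by omega, t, ht⟩
    rw [QBFAux, build, hstate, hatomidx]
    by_cases hpar : (2 * p - r) % 2 = 1
    · rw [if_pos hpar, if_pos (by omega)]
      rw [step_EF hn1 hn2]
      apply exists_congr
      intro β
      have := ih hrr (Function.update b (2 * p - r) β) (stepv m cl v (2 * p - r) β)
        (hinv β)
      rw [hstate'] at this
      exact this
    · rw [if_neg hpar, if_neg (by omega)]
      rw [step_AF hn1 hn2]
      apply forall_congr'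
      intro β
      have := ih hrr (Function.update b (2 * p - r) β) (stepv m cl v (2 * p - r) β)
        (hinv β)
      rw [hstate'] at this
      exact this

end Main
/-- the QBF instance `I` is true iff `q₁ ⊨_{S_I} Ψ_I`. -/
theorem qbf_iff_cctlv
    (p m : ℕ) (hp : 1 ≤ p) (cl : ℕ → Fin 3 → ℕ × Bool)
    (hcl : ∀ j, 1 ≤ j → j ≤ m → ∀ t : Fin 3,
      1 ≤ (cl j t).1 ∧ (cl j t).1 ≤ 2 * p) :
    QBFTrue p m cl ↔
      vsat (SI p cl) (m + 1) (PsiI p m) (Sum.inl 1)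
        (fun _ => 0) (fun _ => none) := by
  rw [QBFTrue, PsiI, vsat_bindAll]
  have hv : (fun z => if 1 ≤ z ∧ z ≤ m then 0 else (fun _ => 0 : ℕ → ℕ) z)
      = (fun _ => 0 : ℕ → ℕ) := by
    funext z; split <;> rfl
  have hε : (fun z => if 1 ≤ z ∧ z ≤ m then some (VForm.atom (Sum.inr z : QProp))
      else (fun _ => (none : Option (VForm QProp))) z) = eps0 m := rfl
  rw [hv, hε]
  have := main_ind hcl (2 * p) le_rfl (fun _ => false) (fun _ => 0)
    (fun j hj1 hj2 => by
      constructor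
      · intro h; simp at h
      · rintro ⟨i, hi1, hi2, -⟩; omega)
  rw [show 2 * p + 1 - 2 * p = 1 by omega] at this
  exact this
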